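/- arXiv:1703.01150 — 2 statements merged into one kernel-verified Lean document; each statement's English description precedes it below -/
import Mathlib

section
/- Let n, m > 1 be integers with n dividing m, write m = p₁^{α₁}⋯p_s^{α_s} where p₁, …, p_s are distinct primes and each α_i ≥ 1, and suppose G_n(Z_m) is not a null graph. If n = p₁^{β₁} for some β₁ ≥ 1 (i.e. n is a power of the single prime p₁), then the chromatic index of G_n(Z_m) equals its maximum degree if and only if β₁·∏_{i=2}^{s}(α_i + 1) is an odd integer. -/
/-- The vertex set of `G_n(Z_m)`: nonzero proper ideals of `Z_m`, identified with
divisors `d` of `m` with `d ≠ 1` and `d ≠ m` (the ideal `dZ_m`). -/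
abbrev IdealVertex (m : ℕ) := {d : ℕ // d ∣ m ∧ d ≠ 1 ∧ d ≠ m}

/-- The graph `G_n(Z_m)`: vertices are the nonzero proper ideals `dZ_m` of `Z_m`,
and distinct vertices `d₁Z_m`, `d₂Z_m` are adjacent iff `d₁Z_n ∩ d₂Z_n ≠ 0`,
equivalently iff `n` does not divide `lcm(d₁, d₂)`. -/
def idealGraph (n m : ℕ) : SimpleGraph (IdealVertex m) where
  Adj I J := I ≠ J ∧ ¬ n ∣ Nat.lcm I.1 J.1
  symm := by
    constructor
    rintro I J ⟨h1, h2⟩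
    exact ⟨h1.symm, by rwa [Nat.lcm_comm]⟩
  loopless := by constructor; rintro I ⟨h1, -⟩; exact h1 rfl

/-- The maximum degree of a graph: the supremum of the numbers of neighbors of vertices. -/
noncomputable def SimpleGraph.maxDeg {V : Type*} (G : SimpleGraph V) : ℕ :=
  sSup {k : ℕ | ∃ v : V, (G.neighborSet v).ncard = k}

/-- `G` admits a proper edge coloring with `k` colors: distinct edges sharing a vertex
receive different colors. -/
def SimpleGraph.EdgeColorable {V : Type*} (G : SimpleGraph V) (k : ℕ) : Prop :=
  ∃ C : G.edgeSet → Fin k, ∀ e₁ e₂ : G.edgeSet, e₁ ≠ e₂ →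
    (∃ v : V, v ∈ (e₁ : Sym2 V) ∧ v ∈ (e₂ : Sym2 V)) → C e₁ ≠ C e₂

/-- The chromatic index of `G`: the least `k` for which `G` has a proper `k`-edge coloring. -/
noncomputable def SimpleGraph.chromIndex {V : Type*} (G : SimpleGraph V) : ℕ :=
  sInf {k : ℕ | G.EdgeColorable k}


def cliqueOn {V : Type*} (S : Set V) : SimpleGraph V where
  Adj a b := a ≠ b ∧ a ∈ S ∧ b ∈ S
  symm := by constructor; rintro a b ⟨h, ha, hb⟩; exact ⟨h.symm, hb, ha⟩
  loopless := by constructor; rintro a ⟨h, -⟩; exact h rfl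

lemma cliqueOn_adj {V : Type*} (S : Set V) (a b : V) :
    (cliqueOn S).Adj a b ↔ a ≠ b ∧ a ∈ S ∧ b ∈ S := Iff.rfl

lemma mem_S_of_mem_edge {V : Type*} {S : Set V} {e : Sym2 V} (he : e ∈ (cliqueOn S).edgeSet)
    {v : V} (hv : v ∈ e) : v ∈ S := by
  induction e using Sym2.ind with
  | _ a b =>
    rw [SimpleGraph.mem_edgeSet, cliqueOn_adj] at he
    rcases Sym2.mem_iff.1 hv with rfl | rfl
    · exact he.2.1
    · exact he.2.2

lemma neighborSet_cliqueOn_of_mem {V : Type*} {S : Set V} {v : V} (hv : v ∈ S) :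
    (cliqueOn S).neighborSet v = S \ {v} := by
  ext w
  simp only [SimpleGraph.mem_neighborSet, cliqueOn_adj, Set.mem_diff, Set.mem_singleton_iff]
  constructor
  · rintro ⟨h, -, hw⟩; exact ⟨hw, fun h' => h h'.symm⟩
  · rintro ⟨hw, h⟩; exact ⟨fun h' => h h'.symm, hv, hw⟩

lemma neighborSet_cliqueOn_of_not_mem {V : Type*} {S : Set V} {v : V} (hv : v ∉ S) :
    (cliqueOn S).neighborSet v = ∅ := by
  ext w
  simp only [SimpleGraph.mem_neighborSet, cliqueOn_adj, Set.mem_empty_iff_false, iff_false]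
  rintro ⟨-, hv', -⟩; exact hv hv'

lemma cliqueOn_maxDeg {V : Type*} [Finite V] (S : Set V) (h2 : 2 ≤ S.ncard) :
    (cliqueOn S).maxDeg = S.ncard - 1 := by
  have hSfin : S.Finite := Set.toFinite _
  obtain ⟨v₀, hv₀⟩ : S.Nonempty := Set.nonempty_of_ncard_ne_zero (by omega)
  refine le_antisymm ?_ ?_
  · refine csSup_le ⟨S.ncard - 1, v₀, ?_⟩ ?_
    · rw [neighborSet_cliqueOn_of_mem hv₀, Set.ncard_diff_singleton_of_mem hv₀]
    rintro k ⟨v, rfl⟩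
    by_cases hv : v ∈ S
    · rw [neighborSet_cliqueOn_of_mem hv, Set.ncard_diff_singleton_of_mem hv]
    · rw [neighborSet_cliqueOn_of_not_mem hv]; simp
  · apply le_csSup
    · obtain ⟨n, hn⟩ := Set.Finite.bddAbove
        (Set.finite_range fun v : V => ((cliqueOn S).neighborSet v).ncard)
      exact ⟨n, fun k ⟨v, hk⟩ => hn ⟨v, hk⟩⟩
    · exact ⟨v₀, by rw [neighborSet_cliqueOn_of_mem hv₀, Set.ncard_diff_singleton_of_mem hv₀]⟩
lemma cliqueOn_colorable {V : Type*} {S : Set V} {N k : ℕ} (hk : 0 < k)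
    (eS : S ≃ Fin N) (F : Fin N → Fin N → Fin k)
    (hsym : ∀ a b, F a b = F b a)
    (hF : ∀ w a b : Fin N, a ≠ b → a ≠ w → b ≠ w → F w a ≠ F w b) :
    (cliqueOn S).EdgeColorable k := by
  classical
  set col : V → V → Fin k := fun u v =>
    if h : u ∈ S ∧ v ∈ S then F (eS ⟨u, h.1⟩) (eS ⟨v, h.2⟩) else ⟨0, hk⟩ with hcol
  have hcolsym : ∀ u v, col u v = col v u := by
    intro u v
    by_cases h : u ∈ S ∧ v ∈ S
    · simp only [hcol, dif_pos h, dif_pos (And.intro h.2 h.1), hsym]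
    · have h' : ¬ (v ∈ S ∧ u ∈ S) := fun h' => h ⟨h'.2, h'.1⟩
      simp only [hcol, dif_neg h, dif_neg h']
  refine ⟨fun e => Sym2.lift ⟨col, hcolsym⟩ e.1, ?_⟩
  rintro ⟨e₁, he₁⟩ ⟨e₂, he₂⟩ hne ⟨v, hv₁, hv₂⟩
  obtain ⟨a, rfl⟩ := Sym2.mem_iff_exists.1 hv₁
  obtain ⟨b, rfl⟩ := Sym2.mem_iff_exists.1 hv₂
  rw [SimpleGraph.mem_edgeSet, cliqueOn_adj] at he₁ he₂
  obtain ⟨hva, hvS, haS⟩ := he₁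
  obtain ⟨hvb, -, hbS⟩ := he₂
  have hab : a ≠ b := by
    intro h; subst h; exact hne rfl
  simp only [Sym2.lift_mk]
  show col v a ≠ col v b
  rw [hcol]
  simp only [dif_pos (And.intro hvS haS), dif_pos (And.intro hvS hbS)]
  refine hF _ _ _ ?_ ?_ ?_
  · simp only [ne_eq, EmbeddingLike.apply_eq_iff_eq, Subtype.mk.injEq]; exact hab
  · simp only [ne_eq, EmbeddingLike.apply_eq_iff_eq, Subtype.mk.injEq]
    exact fun h => hva h.symm
  · simp only [ne_eq, EmbeddingLike.apply_eq_iff_eq, Subtype.mk.injEq]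
    exact fun h => hvb h.symm

lemma exists_F_add (N : ℕ) (hN : 0 < N) :
    ∃ F : Fin N → Fin N → Fin N, (∀ a b, F a b = F b a) ∧
      ∀ w a b : Fin N, a ≠ b → a ≠ w → b ≠ w → F w a ≠ F w b := by
  haveI : NeZero N := ⟨hN.ne'⟩
  refine ⟨fun a b => ⟨((a.1 : ZMod N) + b.1).val, ZMod.val_lt _⟩, ?_, ?_⟩
  · intro a b; simp [add_comm]
  · intro w a b hab _ _ h
    apply hab
    have h0 : ((w.1 : ZMod N) + a.1).val = ((w.1 : ZMod N) + b.1).val := congrArg Fin.val h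
    have h' : ((w.1 : ZMod N) + a.1) = ((w.1 : ZMod N) + b.1) := ZMod.val_injective N h0
    have h2 : (a.1 : ZMod N) = (b.1 : ZMod N) := add_left_cancel h'
    have h3 := congrArg ZMod.val h2
    rw [ZMod.val_cast_of_lt a.2, ZMod.val_cast_of_lt b.2] at h3
    exact Fin.ext h3
lemma exists_F_even (N : ℕ) (h2 : 2 ≤ N) (heven : Even N) :
    ∃ F : Fin N → Fin N → Fin (N - 1), (∀ a b, F a b = F b a) ∧
      ∀ w a b : Fin N, a ≠ b → a ≠ w → b ≠ w → F w a ≠ F w b := by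
  classical
  set M := N - 1 with hM
  haveI : NeZero M := ⟨by omega⟩
  have hModd : Odd M := by
    obtain ⟨t, ht⟩ := heven; refine ⟨t - 1, by omega⟩
  have h2unit : IsUnit (2 : ZMod M) := by
    rw [show ((2 : ZMod M) = ((2 : ℕ) : ZMod M)) by norm_cast, ZMod.isUnit_iff_coprime]
    rw [Nat.prime_two.coprime_iff_not_dvd]
    intro hdvd
    exact (Nat.not_even_iff_odd.2 hModd) (even_iff_two_dvd.2 hdvd)
  set last : Fin N := ⟨N - 1, by omega⟩ with hlast
  have hlt : ∀ x : Fin N, x ≠ last → x.1 < M := by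
    intro x hx
    have : x.1 ≠ N - 1 := fun h => hx (Fin.ext h)
    omega
  have hcastinj : ∀ x y : Fin N, x ≠ last → y ≠ last →
      (x.1 : ZMod M) = (y.1 : ZMod M) → x = y := by
    intro x y hx hy h
    have := congrArg ZMod.val h
    rw [ZMod.val_cast_of_lt (hlt x hx), ZMod.val_cast_of_lt (hlt y hy)] at this
    exact Fin.ext this
  set g : Fin N → Fin N → ZMod M := fun w a =>
    if w = last then 2 * (a.1 : ZMod M)
    else if a = last then 2 * (w.1 : ZMod M)
    else (w.1 : ZMod M) + (a.1 : ZMod M) with hg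
  refine ⟨fun w a => ⟨(g w a).val, lt_of_lt_of_le (ZMod.val_lt _) le_rfl⟩, ?_, ?_⟩
  · intro a b
    apply Fin.ext
    simp only
    congr 1
    by_cases ha : a = last <;> by_cases hb : b = last <;>
      simp [hg, ha, hb, add_comm]
  · intro w a b hab haw hbw h
    have hgab : g w a = g w b := ZMod.val_injective M (congrArg Fin.val h)
    by_cases hw : w = last
    · rw [hg] at hgab
      simp only [if_pos hw] at hgab
      have hanl : a ≠ last := by rw [← hw]; exact haw
      have hbnl : b ≠ last := by rw [← hw]; exact hbw
      exact hab (hcastinj a b hanl hbnl (h2unit.mul_left_cancel hgab))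
    · rw [hg] at hgab
      simp only [if_neg hw] at hgab
      by_cases ha : a = last
      · have hbnl : b ≠ last := fun hbl => hab (by rw [ha, hbl])
        rw [if_pos ha, if_neg hbnl, two_mul] at hgab
        have := add_left_cancel hgab
        exact hbw (hcastinj b w hbnl hw this.symm)
      · by_cases hb : b = last
        · rw [if_neg ha, if_pos hb, two_mul] at hgab
          have := add_left_cancel hgab
          exact haw (hcastinj a w ha hw this)
        · rw [if_neg ha, if_neg hb] at hgab
          exact hab (hcastinj a b ha hb (add_left_cancel hgab))
lemma cliqueOn_lb {V : Type*} [Finite V] (S : Set V) {k : ℕ}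
    (h : (cliqueOn S).EdgeColorable k) : S.ncard - 1 ≤ k := by
  classical
  rcases Nat.lt_or_ge S.ncard 2 with h2 | h2
  · omega
  obtain ⟨C, hC⟩ := h
  obtain ⟨v₀, hv₀⟩ : S.Nonempty := Set.nonempty_of_ncard_ne_zero (by omega)
  have hSfin : S.Finite := Set.toFinite _
  -- map each neighbor w to the color of edge s(v₀, w)
  have hedge : ∀ w ∈ S \ {v₀}, s(v₀, w) ∈ (cliqueOn S).edgeSet := by
    rintro w ⟨hwS, hwv⟩
    rw [SimpleGraph.mem_edgeSet, cliqueOn_adj]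
    exact ⟨fun hh => hwv hh.symm, hv₀, hwS⟩
  set φ : V → Fin k := fun w => if hw : s(v₀, w) ∈ (cliqueOn S).edgeSet then C ⟨_, hw⟩ else ⟨0, by
      by_contra hk0
      have : k = 0 := by omega
      subst this
      obtain ⟨w, hw⟩ := Set.nonempty_of_ncard_ne_zero
        (show (S \ {v₀}).ncard ≠ 0 by rw [Set.ncard_diff_singleton_of_mem hv₀]; omega)
      exact (C ⟨_, hedge w hw⟩).elim0⟩ with hφ
  have hinj : Set.InjOn φ (S \ {v₀}) := by
    intro w₁ hw₁ w₂ hw₂ heq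
    by_contra hne
    have he₁ := hedge w₁ hw₁
    have he₂ := hedge w₂ hw₂
    have : (⟨_, he₁⟩ : (cliqueOn S).edgeSet) ≠ ⟨_, he₂⟩ := by
      intro hh
      exact hne (Sym2.congr_right.1 (congrArg Subtype.val hh))
    refine hC _ _ this ⟨v₀, ?_, ?_⟩ ?_
    · exact Sym2.mem_mk_left _ _
    · exact Sym2.mem_mk_left _ _
    · simp only [hφ] at heq
      rw [dif_pos he₁, dif_pos he₂] at heq
      exact heq
  calc S.ncard - 1 = (S \ {v₀}).ncard := (Set.ncard_diff_singleton_of_mem hv₀).symm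
    _ = (φ '' (S \ {v₀})).ncard := (Set.ncard_image_of_injOn hinj).symm
    _ ≤ (Set.univ : Set (Fin k)).ncard := Set.ncard_le_ncard (Set.subset_univ _) (Set.toFinite _)
    _ = k := by rw [Set.ncard_univ]; simp
lemma cliqueOn_lb_odd {V : Type*} [Finite V] (S : Set V) (hodd : Odd S.ncard)
    (h2 : 2 ≤ S.ncard) {k : ℕ} (h : (cliqueOn S).EdgeColorable k) : S.ncard ≤ k := by
  classical
  haveI : Fintype V := Fintype.ofFinite V
  set G := cliqueOn S with hG
  haveI : DecidableRel G.Adj := fun a b => Classical.dec _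
  set N := S.ncard with hN
  obtain ⟨C, hC⟩ := h
  obtain ⟨a₀, b₀, ha₀, hb₀, hab₀⟩ := (Set.one_lt_ncard_iff (Set.toFinite S)).1 (by omega)
  have he₀ : s(a₀, b₀) ∈ G.edgeSet := by
    rw [SimpleGraph.mem_edgeSet, hG, cliqueOn_adj]; exact ⟨hab₀, ha₀, hb₀⟩
  have hk : 0 < k := by
    by_contra hk0
    have : k = 0 := by omega
    subst this
    exact (C ⟨_, he₀⟩).elim0
  set C' : Sym2 V → Fin k := fun e => if h : e ∈ G.edgeSet then C ⟨e, h⟩ else ⟨0, hk⟩ with hC'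
  have key : ∀ e₁ e₂ : Sym2 V, e₁ ∈ G.edgeSet → e₂ ∈ G.edgeSet → e₁ ≠ e₂ →
      C' e₁ = C' e₂ → ∀ v, v ∈ e₁ → v ∈ e₂ → False := by
    intro e₁ e₂ h₁ h₂ hne hcc v hv₁ hv₂
    refine hC ⟨e₁, h₁⟩ ⟨e₂, h₂⟩ (fun hh => hne (congrArg Subtype.val hh)) ⟨v, hv₁, hv₂⟩ ?_
    simp only [hC'] at hcc
    rw [dif_pos h₁, dif_pos h₂] at hcc
    exact hcc
  -- degree sum
  have hdeg : ∀ v : V, G.degree v = if v ∈ S then N - 1 else 0 := by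
    intro v
    rw [← SimpleGraph.card_neighborSet_eq_degree]
    rw [← Nat.card_eq_fintype_card, Nat.card_coe_set_eq]
    by_cases hv : v ∈ S
    · rw [if_pos hv, show G.neighborSet v = S \ {v} from neighborSet_cliqueOn_of_mem hv,
        Set.ncard_diff_singleton_of_mem hv]
    · rw [if_neg hv, show G.neighborSet v = ∅ from neighborSet_cliqueOn_of_not_mem hv,
        Set.ncard_empty]
  have hsum : ∑ v : V, G.degree v = N * (N - 1) := by
    rw [Finset.sum_congr rfl fun v _ => hdeg v, ← Finset.sum_filter]
    rw [Finset.sum_const, smul_eq_mul]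
    congr 1
    rw [hN, ← Set.ncard_coe_finset]
    congr 1
    ext x
    simp
  have hE : 2 * G.edgeFinset.card = N * (N - 1) := by
    rw [← SimpleGraph.sum_degrees_eq_twice_card_edges, hsum]
  have hfib : G.edgeFinset.card = ∑ c : Fin k, (G.edgeFinset.filter (fun e => C' e = c)).card :=
    Finset.card_eq_sum_card_fiberwise (fun x _ => Finset.mem_univ _)
  set endsOf : Sym2 V → Finset V :=
    Sym2.lift ⟨fun a b => ({a, b} : Finset V), fun a b => by simp only []; rw [Finset.pair_comm]⟩
    with hends
  have mem_endsOf : ∀ (v : V) (e : Sym2 V), v ∈ endsOf e ↔ v ∈ e := by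
    intro v e
    induction e using Sym2.ind with
    | _ a b => simp [hends, Sym2.mem_iff]
  have hper : ∀ c : Fin k, 2 * ((G.edgeFinset.filter (fun e => C' e = c)).card) ≤ N - 1 := by
    intro c
    set M := G.edgeFinset.filter (fun e => C' e = c) with hMdef
    have hdisj : ∀ e₁ ∈ M, ∀ e₂ ∈ M, e₁ ≠ e₂ → Disjoint (endsOf e₁) (endsOf e₂) := by
      intro e₁ h₁ e₂ h₂ hne
      rw [hMdef, Finset.mem_filter, SimpleGraph.mem_edgeFinset] at h₁ h₂
      rw [Finset.disjoint_left]
      intro v hv₁ hv₂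
      exact key e₁ e₂ h₁.1 h₂.1 hne (h₁.2.trans h₂.2.symm) v
        ((mem_endsOf v e₁).1 hv₁) ((mem_endsOf v e₂).1 hv₂)
    have hcard2 : ∀ e ∈ M, (endsOf e).card = 2 := by
      intro e he
      rw [hMdef, Finset.mem_filter, SimpleGraph.mem_edgeFinset] at he
      have := he.1
      induction e using Sym2.ind with
      | _ a b =>
        rw [SimpleGraph.mem_edgeSet, hG, cliqueOn_adj] at this
        show ({a, b} : Finset V).card = 2
        exact Finset.card_pair this.1
    have hB : (M.biUnion endsOf).card = 2 * M.card := by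
      rw [Finset.card_biUnion hdisj, Finset.sum_congr rfl hcard2, Finset.sum_const,
        smul_eq_mul, mul_comm]
    have hBsub : M.biUnion endsOf ⊆ S.toFinset := by
      intro v hv
      rw [Finset.mem_biUnion] at hv
      obtain ⟨e, he, hve⟩ := hv
      rw [hMdef, Finset.mem_filter, SimpleGraph.mem_edgeFinset] at he
      rw [Set.mem_toFinset]
      exact mem_S_of_mem_edge he.1 ((mem_endsOf v e).1 hve)
    have hle : 2 * M.card ≤ N := by
      rw [← hB]
      calc (M.biUnion endsOf).card ≤ S.toFinset.card := Finset.card_le_card hBsub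
        _ = N := by rw [hN, Set.ncard_eq_toFinset_card']
    obtain ⟨t, ht⟩ := hodd
    omega
  have hfinal : N * (N - 1) ≤ k * (N - 1) := by
    calc N * (N - 1) = 2 * G.edgeFinset.card := hE.symm
      _ = ∑ c : Fin k, 2 * ((G.edgeFinset.filter (fun e => C' e = c)).card) := by
          rw [hfib, Finset.mul_sum]
      _ ≤ ∑ _c : Fin k, (N - 1) := Finset.sum_le_sum fun c _ => hper c
      _ = k * (N - 1) := by rw [Finset.sum_const, Finset.card_univ, Fintype.card_fin,
          smul_eq_mul]
  exact Nat.le_of_mul_le_mul_right hfinal (by omega)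
lemma cliqueOn_equiv {V : Type*} [Finite V] (S : Set V) :
    Nonempty (S ≃ Fin S.ncard) := by
  classical
  haveI : Fintype V := Fintype.ofFinite V
  exact ⟨Fintype.equivFinOfCardEq (by
    rw [← Nat.card_eq_fintype_card, Nat.card_coe_set_eq])⟩

lemma cliqueOn_chromIndex_even {V : Type*} [Finite V] (S : Set V)
    (h2 : 2 ≤ S.ncard) (heven : Even S.ncard) :
    (cliqueOn S).chromIndex = S.ncard - 1 := by
  obtain ⟨eS⟩ := cliqueOn_equiv S
  obtain ⟨F, hFsym, hF⟩ := exists_F_even S.ncard h2 heven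
  have hcol : (cliqueOn S).EdgeColorable (S.ncard - 1) :=
    cliqueOn_colorable (by omega) eS F hFsym hF
  exact le_antisymm (Nat.sInf_le hcol)
    (le_csInf ⟨_, hcol⟩ fun k hk => cliqueOn_lb S hk)

lemma cliqueOn_chromIndex_odd {V : Type*} [Finite V] (S : Set V)
    (h2 : 2 ≤ S.ncard) (hodd : Odd S.ncard) :
    (cliqueOn S).chromIndex = S.ncard := by
  obtain ⟨eS⟩ := cliqueOn_equiv S
  obtain ⟨F, hFsym, hF⟩ := exists_F_add S.ncard (by omega)
  have hcol : (cliqueOn S).EdgeColorable S.ncard :=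
    cliqueOn_colorable (by omega) eS F hFsym hF
  exact le_antisymm (Nat.sInf_le hcol)
    (le_csInf ⟨_, hcol⟩ fun k hk => cliqueOn_lb_odd S hodd h2 hk)
lemma prodpow_factorization {s : ℕ} (p : Fin s → ℕ) (hp : ∀ i, (p i).Prime) (e : Fin s → ℕ) :
    (∏ i, p i ^ e i).factorization = ∑ i, Finsupp.single (p i) (e i) := by
  rw [Nat.factorization_prod (fun i _ => pow_ne_zero _ (hp i).pos.ne')]
  exact Finset.sum_congr rfl fun i _ => (hp i).factorization_pow

lemma prodpow_factorization_apply {s : ℕ} (p : Fin s → ℕ) (hp : ∀ i, (p i).Prime)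
    (hinj : Function.Injective p) (e : Fin s → ℕ) (j : Fin s) :
    (∏ i, p i ^ e i).factorization (p j) = e j := by
  rw [prodpow_factorization p hp e, Finsupp.finset_sum_apply]
  rw [Finset.sum_eq_single j]
  · rw [Finsupp.single_eq_same]
  · intro i _ hij
    rw [Finsupp.single_apply, if_neg (fun h => hij (hinj h))]
  · intro h; exact absurd (Finset.mem_univ j) h

lemma prodpow_factorization_apply_ne {s : ℕ} (p : Fin s → ℕ) (hp : ∀ i, (p i).Prime)
    (e e' : Fin s → ℕ) (r : ℕ) (j : Fin s) (hje : ∀ i, i ≠ j → e i = e' i) (hr : r ≠ p j) :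
    (∏ i, p i ^ e i).factorization r = (∏ i, p i ^ e' i).factorization r := by
  rw [prodpow_factorization p hp e, prodpow_factorization p hp e',
    Finsupp.finset_sum_apply, Finsupp.finset_sum_apply]
  refine Finset.sum_congr rfl fun i _ => ?_
  by_cases hij : i = j
  · subst hij
    rw [Finsupp.single_apply, Finsupp.single_apply, if_neg (fun h => hr h.symm),
      if_neg (fun h => hr h.symm)]
  · rw [hje i hij]

lemma card_divisors_prodpow {s : ℕ} (p : Fin s → ℕ) (hp : ∀ i, (p i).Prime)
    (hinj : Function.Injective p) (e : Fin s → ℕ) (t : Finset (Fin s)) :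
    (∏ i ∈ t, p i ^ e i).divisors.card = ∏ i ∈ t, (e i + 1) := by
  classical
  induction t using Finset.induction_on with
  | empty => simp
  | @insert a t ha ih =>
    rw [Finset.prod_insert ha, Finset.prod_insert ha]
    have hcop : Nat.Coprime (p a ^ e a) (∏ i ∈ t, p i ^ e i) := by
      apply Nat.Coprime.pow_left
      apply Nat.Coprime.prod_right
      intro i hi
      apply Nat.Coprime.pow_right
      rw [(hp a).coprime_iff_not_dvd, Nat.prime_dvd_prime_iff_eq (hp a) (hp i)]
      intro h
      exact ha (hinj h ▸ hi)
    rw [hcop.card_divisors_mul, ih]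
    congr 1
    rw [Nat.divisors_prime_pow (hp a), Finset.card_map, Finset.card_range]
/-- If `n = p₁^{β₁}` is a prime power and `G_n(Z_m)` is not a null graph, then the
chromatic index of `G_n(Z_m)` equals its maximum degree iff `β₁·∏_{i=2}^{s}(αᵢ+1)` is odd. -/
theorem idealGraph_chromIndex_primePower (n m s : ℕ) (hs : 0 < s)
    (hn : 1 < n) (hm : 1 < m) (hdvd : n ∣ m)
    (p α : Fin s → ℕ) (hp : ∀ i, (p i).Prime) (hinj : Function.Injective p)
    (hα : ∀ i, 1 ≤ α i) (hmeq : m = ∏ i, p i ^ α i)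
    (β₁ : ℕ) (hβ₁ : 1 ≤ β₁) (hneq : n = p ⟨0, hs⟩ ^ β₁)
    (hnotnull : ∃ a b : IdealVertex m, (idealGraph n m).Adj a b) :
    (idealGraph n m).chromIndex = (idealGraph n m).maxDeg ↔
      Odd (β₁ * ∏ i ∈ Finset.univ.erase ⟨0, hs⟩, (α i + 1)) := by
  classical
  set i₀ : Fin s := ⟨0, hs⟩ with hi₀
  set q : ℕ := p i₀ with hqdef
  have hq : q.Prime := hp i₀
  have hm0 : m ≠ 0 := by omega
  haveI : Finite (IdealVertex m) := Finite.of_injective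
    (fun I : IdealVertex m =>
      (⟨I.1, Nat.lt_succ_of_le (Nat.le_of_dvd (by omega) I.2.1)⟩ : Fin (m + 1)))
    (fun I J h => Subtype.ext (by simpa using congrArg Fin.val h))
  set S : Set (IdealVertex m) := {I | ¬ q ^ β₁ ∣ I.1} with hS
  have hvert0 : ∀ I : IdealVertex m, I.1 ≠ 0 := by
    rintro ⟨d, hd, -, hdm⟩ rfl
    exact hdm (Nat.eq_zero_of_zero_dvd hd).symm
  -- graph equality
  have hgr : idealGraph n m = cliqueOn S := by
    ext I J
    show (I ≠ J ∧ ¬ n ∣ Nat.lcm I.1 J.1) ↔ (I ≠ J ∧ I ∈ S ∧ J ∈ S)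
    have hI0 := hvert0 I
    have hJ0 := hvert0 J
    have hiff : n ∣ Nat.lcm I.1 J.1 ↔ q ^ β₁ ∣ I.1 ∨ q ^ β₁ ∣ J.1 := by
      rw [hneq,
        hq.pow_dvd_iff_le_factorization (Nat.lcm_ne_zero hI0 hJ0),
        Nat.factorization_lcm hI0 hJ0, Finsupp.sup_apply, le_sup_iff,
        ← hq.pow_dvd_iff_le_factorization hI0, ← hq.pow_dvd_iff_le_factorization hJ0]
    rw [hiff]
    simp only [hS, Set.mem_setOf_eq]
    tauto
  -- facts about exponents
  have hα0 : m.factorization q = α i₀ := by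
    rw [hmeq]; exact prodpow_factorization_apply p hp hinj α i₀
  have hβα : β₁ ≤ α i₀ := by
    rw [hneq] at hdvd
    have := (hq.pow_dvd_iff_le_factorization hm0).1 hdvd
    omega
  set e : Fin s → ℕ := Function.update α i₀ (β₁ - 1) with he
  set m' : ℕ := ∏ i, p i ^ e i with hm'
  have hm'0 : m' ≠ 0 := (Finset.prod_pos (fun i _ => pow_pos (hp i).pos _)).ne'
  have he0 : e i₀ = β₁ - 1 := Function.update_self _ _ _
  have hei : ∀ i, i ≠ i₀ → e i = α i := fun i hi => Function.update_of_ne hi _ _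
  have hm'q : m'.factorization q = β₁ - 1 := by
    rw [hm', prodpow_factorization_apply p hp hinj e i₀, he0]
  have hm'dvd : m' ∣ m := by
    rw [hmeq, hm']
    refine Finset.prod_dvd_prod_of_dvd _ _ (fun i _ => pow_dvd_pow _ ?_)
    by_cases hi : i = i₀
    · subst hi; rw [he0]; omega
    · rw [hei i hi]
  have hdd : ∀ d : ℕ, d ≠ 0 → (d ∣ m' ↔ d ∣ m ∧ ¬ q ^ β₁ ∣ d) := by
    intro d hd0
    constructor
    · intro hdm'
      refine ⟨hdm'.trans hm'dvd, fun hqd => ?_⟩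
      have : q ^ β₁ ∣ m' := hqd.trans hdm'
      have := (hq.pow_dvd_iff_le_factorization hm'0).1 this
      omega
    · rintro ⟨hdm, hqd⟩
      rw [← Nat.factorization_le_iff_dvd hd0 hm'0, Finsupp.le_def]
      intro r
      by_cases hr : r = q
      · have h1 : ¬ β₁ ≤ d.factorization q := fun h =>
          hqd ((hq.pow_dvd_iff_le_factorization hd0).2 h)
        rw [hr, hm'q]
        omega
      · have h1 : d.factorization r ≤ m.factorization r :=
          Finsupp.le_def.1 ((Nat.factorization_le_iff_dvd hd0 hm0).2 hdm) r
        have h2 : m.factorization r = m'.factorization r := by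
          rw [hmeq, hm']
          exact prodpow_factorization_apply_ne p hp α e r i₀
            (fun i hi => (hei i hi).symm) hr
        omega
  -- counting
  have hτ : m'.divisors.card = ∏ i, (e i + 1) :=
    card_divisors_prodpow p hp hinj e Finset.univ
  set T : ℕ := β₁ * ∏ i ∈ Finset.univ.erase i₀, (α i + 1) with hT
  have hTeq : ∏ i, (e i + 1) = T := by
    rw [← Finset.mul_prod_erase Finset.univ _ (Finset.mem_univ i₀), hT]
    congr 1
    · rw [he0]; omega
    · exact Finset.prod_congr rfl fun i hi => by rw [hei i (Finset.ne_of_mem_erase hi)]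
  have hval : Subtype.val '' S = ↑(m'.divisors.erase 1) := by
    ext d
    constructor
    · rintro ⟨⟨d', hd'm, hd'1, hd'ne⟩, hdS, rfl⟩
      have hd0 : d' ≠ 0 := hvert0 ⟨d', hd'm, hd'1, hd'ne⟩
      simp only [Finset.coe_erase, Set.mem_diff, Set.mem_singleton_iff, Finset.mem_coe,
        Nat.mem_divisors]
      exact ⟨⟨(hdd d' hd0).2 ⟨hd'm, hdS⟩, hm'0⟩, hd'1⟩
    · intro hd
      simp only [Finset.coe_erase, Set.mem_diff, Set.mem_singleton_iff, Finset.mem_coe,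
        Nat.mem_divisors] at hd
      obtain ⟨⟨hdm', -⟩, hd1⟩ := hd
      have hd0 : d ≠ 0 := by
        rintro rfl
        exact hm'0 (Nat.eq_zero_of_zero_dvd hdm')
      obtain ⟨hdm, hqd⟩ := (hdd d hd0).1 hdm'
      have hdne : d ≠ m := by
        rintro rfl
        rw [hneq] at hdvd
        exact hqd hdvd
      exact ⟨⟨d, hdm, hd1, hdne⟩, hqd, rfl⟩
  have hSn : S.ncard = T - 1 := by
    rw [← Set.ncard_image_of_injOn (Subtype.val_injective.injOn), hval,
      Set.ncard_coe_finset, Finset.card_erase_of_mem (Nat.one_mem_divisors.2 hm'0), hτ, hTeq]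
  -- N ≥ 2
  obtain ⟨a, b, hab⟩ := hnotnull
  rw [hgr] at hab
  obtain ⟨habne, haS, hbS⟩ := hab
  have h2 : 2 ≤ S.ncard := (Set.one_lt_ncard_iff (Set.toFinite S)).2 ⟨a, b, haS, hbS, habne⟩
  have hTN : T = S.ncard + 1 := by omega
  rw [hgr, cliqueOn_maxDeg S h2]
  rcases Nat.even_or_odd S.ncard with hev | hod
  · rw [cliqueOn_chromIndex_even S h2 hev]
    simp only [true_iff, eq_self_iff_true]
    rw [hTN]
    exact Even.add_one hev
  · rw [cliqueOn_chromIndex_odd S h2 hod]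
    constructor
    · intro h; omega
    · intro h
      rw [hTN] at h
      obtain ⟨t, ht⟩ := hod
      obtain ⟨u, hu⟩ := h
      omega
end

section
/- Let p₁, p₂ be distinct primes, let n = p₁p₂ and m = p₁^{α₁}p₂^{α₂} with α₁, α₂ ≥ 1, and suppose G_n(Z_m) is not a null graph. Then the chromatic index of G_n(Z_m) equals its maximum degree if and only if max{α₁, α₂} is an even integer. -/

def rrg (K x y : ℕ) : ℕ :=
  if x = K then (2*y) % K else if y = K then (2*x) % K else (x+y) % K

lemma rrg_symm (K x y : ℕ) : rrg K x y = rrg K y x := by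
  unfold rrg
  by_cases hx : x = K <;> by_cases hy : y = K <;> simp [hx, hy]
  · ring_nf

lemma rrg_lt {K : ℕ} (hK : 0 < K) (x y : ℕ) : rrg K x y < K := by
  unfold rrg
  split_ifs <;> exact Nat.mod_lt _ hK

lemma rrg_proper {K x y y' : ℕ} (hodd : Odd K) (hx : x ≤ K) (hy : y ≤ K) (hy' : y' ≤ K)
    (hxy : y ≠ x) (hxy' : y' ≠ x) (hyy' : y ≠ y') : rrg K x y ≠ rrg K x y' := by
  have hK : 0 < K := hodd.pos
  have hcop : Nat.Coprime 2 K := hodd.coprime_two_left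
  have cancel2 : ∀ a b : ℕ, a < K → b < K → (2*a) % K = (2*b) % K → a = b := by
    intro a b ha hb h
    have : a ≡ b [MOD K] := Nat.ModEq.cancel_left_of_coprime (by simpa using hcop) h
    rwa [Nat.ModEq, Nat.mod_eq_of_lt ha, Nat.mod_eq_of_lt hb] at this
  by_cases hxK : x = K
  · have h1 : y < K := lt_of_le_of_ne hy (hxK ▸ hxy)
    have h2 : y' < K := lt_of_le_of_ne hy' (hxK ▸ hxy')
    simp only [rrg, if_pos hxK]
    exact fun h => hyy' (cancel2 _ _ h1 h2 h)
  · have hxlt : x < K := lt_of_le_of_ne hx hxK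
    have key : ∀ a b : ℕ, a < K → b < K → (x + a) % K = (x + b) % K → a = b := by
      intro a b ha hb h
      have : a ≡ b [MOD K] := Nat.ModEq.add_left_cancel' x h
      rwa [Nat.ModEq, Nat.mod_eq_of_lt ha, Nat.mod_eq_of_lt hb] at this
    by_cases hyK : y = K
    · have hy'K : y' ≠ K := fun h => hyy' (hyK.trans h.symm)
      have h2 : y' < K := lt_of_le_of_ne hy' hy'K
      simp only [rrg, if_neg hxK, if_pos hyK, if_neg hy'K]
      intro h
      have : (x + x) % K = (x + y') % K := by rw [← h]; ring_nf
      exact hxy' (key _ _ hxlt h2 this).symm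
    · have h1 : y < K := lt_of_le_of_ne hy hyK
      by_cases hy'K : y' = K
      · simp only [rrg, if_neg hxK, if_neg hyK, if_pos hy'K]
        intro h
        have : (x + y) % K = (x + x) % K := by rw [h]; ring_nf
        exact hxy (key _ _ h1 hxlt this)
      · have h2 : y' < K := lt_of_le_of_ne hy' hy'K
        simp only [rrg, if_neg hxK, if_neg hyK, if_neg hy'K]
        exact fun h => hyy' (key _ _ h1 h2 h)


lemma edgeColorable_of_proper {V : Type*} (G : SimpleGraph V) {k : ℕ} (f : V → V → Fin k)
    (hsymm : ∀ v u, f v u = f u v)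
    (hproper : ∀ v u u', G.Adj v u → G.Adj v u' → u ≠ u' → f v u ≠ f v u') :
    G.EdgeColorable k := by
  refine ⟨fun e => Sym2.lift ⟨f, fun v u => hsymm v u⟩ e.1, ?_⟩
  rintro ⟨e₁, he₁⟩ ⟨e₂, he₂⟩ hne ⟨v, hv₁, hv₂⟩
  obtain ⟨u₁, rfl⟩ : ∃ u, e₁ = s(v, u) := ⟨Sym2.Mem.other hv₁, (Sym2.other_spec hv₁).symm⟩
  obtain ⟨u₂, rfl⟩ : ∃ u, e₂ = s(v, u) := ⟨Sym2.Mem.other hv₂, (Sym2.other_spec hv₂).symm⟩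
  have h₁ : G.Adj v u₁ := he₁
  have h₂ : G.Adj v u₂ := he₂
  have hu : u₁ ≠ u₂ := by
    rintro rfl; exact hne rfl
  simpa using hproper v u₁ u₂ h₁ h₂ hu

lemma ncard_neighbor_le_of_colorable {V : Type*} (G : SimpleGraph V) {k : ℕ}
    (h : G.EdgeColorable k) (v : V) : (G.neighborSet v).ncard ≤ k := by
  by_cases hfin : (G.neighborSet v).Finite
  · obtain ⟨C, hC⟩ := h
    have hinj : Function.Injective
        (fun u : G.neighborSet v => C ⟨s(v, u.1), u.2⟩) := by
      rintro ⟨u, hu⟩ ⟨u', hu'⟩ hCeq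
      by_contra hne
      have hne' : u ≠ u' := fun h => hne (Subtype.ext h)
      have hEne : (⟨s(v,u), hu⟩ : G.edgeSet) ≠ ⟨s(v,u'), hu'⟩ := by
        intro h
        exact hne' (Sym2.congr_right.mp (congrArg Subtype.val h))
      exact hC _ _ hEne ⟨v, by simp, by simp⟩ hCeq
    have := Nat.card_le_card_of_injective _ hinj
    simpa [Nat.card_coe_set_eq] using this
  · simp [Set.ncard_eq_zero] at *
    rw [Set.Infinite.ncard (by simpa using hfin)]
    exact Nat.zero_le _


open Finset in
lemma odd_clique_color_bound {M k : ℕ} (hM : 3 ≤ M) (hodd : Odd M)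
    (c : Sym2 (Fin M) → Fin k)
    (hc : ∀ e₁ e₂ : Sym2 (Fin M), ¬e₁.IsDiag → ¬e₂.IsDiag → e₁ ≠ e₂ →
      (∃ v, v ∈ e₁ ∧ v ∈ e₂) → c e₁ ≠ c e₂) : M ≤ k := by
  obtain ⟨K, hK⟩ : ∃ K, M = 2*K + 1 := hodd
  have hKpos : 1 ≤ K := by omega
  set F : Finset (Sym2 (Fin M)) := univ.filter (fun e => ¬ e.IsDiag) with hF
  have hFcard : F.card = M.choose 2 := by
    rw [hF, ← Fintype.card_subtype, Sym2.card_subtype_not_diag, Fintype.card_fin]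
  have hsum : F.card = ∑ col : Fin k, (F.filter fun e => c e = col).card :=
    Finset.card_eq_sum_card_fiberwise (fun e _ => mem_univ _)
  have hfiber : ∀ col : Fin k, (F.filter fun e => c e = col).card ≤ K := by
    intro col
    set G := F.filter fun e => c e = col with hG
    have hnd : ∀ e ∈ G, ¬ e.IsDiag := by
      intro e he
      exact (mem_filter.mp (mem_filter.mp he).1).2
    have hvs : ∀ e ∈ G, (univ.filter (· ∈ e)).card = 2 := by
      intro e he
      induction e with
      | _ a b =>
        have hab : a ≠ b := by simpa using hnd _ he
        have : (univ.filter (· ∈ s(a,b))) = {a, b} := by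
          ext x; simp [Sym2.mem_iff]
        rw [this, card_insert_of_notMem (by simpa using hab), card_singleton]
    have hdisj : ∀ e₁ ∈ G, ∀ e₂ ∈ G, e₁ ≠ e₂ →
        Disjoint (univ.filter (· ∈ e₁)) (univ.filter (· ∈ e₂)) := by
      intro e₁ h₁ e₂ h₂ hne
      rw [Finset.disjoint_left]
      intro x hx₁ hx₂
      have hcol : c e₁ = c e₂ := by
        rw [(mem_filter.mp h₁).2, (mem_filter.mp h₂).2]
      exact hc e₁ e₂ (hnd _ h₁) (hnd _ h₂) hne
        ⟨x, by simpa using hx₁, by simpa using hx₂⟩ hcol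
    have hbu : (G.biUnion (fun e => univ.filter (· ∈ e))).card = 2 * G.card := by
      rw [Finset.card_biUnion hdisj, Finset.sum_congr rfl hvs, Finset.sum_const,
        smul_eq_mul, Nat.mul_comm]
    have hle : (G.biUnion (fun e => univ.filter (· ∈ e))).card ≤ M := by
      have := Finset.card_le_univ (G.biUnion (fun e => univ.filter (· ∈ e)))
      simpa using this
    omega
  have htot : M.choose 2 ≤ k * K := by
    calc M.choose 2 = F.card := hFcard.symm
    _ = ∑ col : Fin k, (F.filter fun e => c e = col).card := hsum
    _ ≤ ∑ _col : Fin k, K := Finset.sum_le_sum (fun col _ => hfiber col)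
    _ = k * K := by simp [Finset.sum_const, mul_comm]
  have hch : M.choose 2 = M * K := by
    rw [Nat.choose_two_right, show M - 1 = 2*K by omega, show M*(2*K) = M*K*2 by ring,
      Nat.mul_div_cancel _ (by norm_num)]
  rw [hch] at htot
  exact Nat.le_of_mul_le_mul_right (by omega) hKpos

section NT
variable {p₁ p₂ α₁ α₂ n m : ℕ}

lemma myaux_not_dvd_pow (hp₁ : p₁.Prime) (hp₂ : p₂.Prime) (hne : p₁ ≠ p₂) (a : ℕ) :
    ¬ p₂ ∣ p₁ ^ a := by
  intro h
  exact hne ((Nat.prime_dvd_prime_iff_eq hp₂ hp₁).mp (hp₂.dvd_of_dvd_pow h)).symm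

lemma myaux_mem_pow (hp₁ : p₁.Prime) (hp₂ : p₂.Prime) (hne : p₁ ≠ p₂) (hα₂ : 1 ≤ α₂)
    (hmeq : m = p₁ ^ α₁ * p₂ ^ α₂) {a : ℕ} (h1 : 1 ≤ a) (h2 : a ≤ α₁) :
    p₁ ^ a ∣ m ∧ p₁ ^ a ≠ 1 ∧ p₁ ^ a ≠ m := by
  refine ⟨hmeq ▸ dvd_mul_of_dvd_left (pow_dvd_pow p₁ h2) _, ?_, ?_⟩
  · have := Nat.one_lt_pow (by omega) hp₁.one_lt (n := a)
    omega
  · intro h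
    have hdvd : p₂ ∣ m := hmeq ▸ dvd_mul_of_dvd_right (dvd_pow_self p₂ (by omega)) _
    exact myaux_not_dvd_pow hp₁ hp₂ hne a (h ▸ hdvd)

lemma myaux_vert_pow (hp₁ : p₁.Prime) (hp₂ : p₂.Prime)
    (hmeq : m = p₁ ^ α₁ * p₂ ^ α₂) (v : IdealVertex m) (h : ¬ p₂ ∣ v.1) :
    ∃ a, 1 ≤ a ∧ a ≤ α₁ ∧ v.1 = p₁ ^ a := by
  obtain ⟨hdvd, hne1, hnem⟩ := v.2
  have hcop : Nat.Coprime v.1 (p₂ ^ α₂) :=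
    Nat.Coprime.pow_right _ (Nat.coprime_comm.mp ((hp₂.coprime_iff_not_dvd).mpr h))
  have hdvd' : v.1 ∣ p₁ ^ α₁ := hcop.dvd_of_dvd_mul_right (hmeq ▸ hdvd)
  obtain ⟨a, ha, hva⟩ := (Nat.dvd_prime_pow hp₁).mp hdvd'
  refine ⟨a, ?_, ha, hva⟩
  rcases Nat.eq_zero_or_pos a with rfl | hpos
  · simp at hva; exact absurd hva hne1
  · exact hpos

lemma myaux_vert_dvd_or (hp₁ : p₁.Prime) (hp₂ : p₂.Prime)
    (hmeq : m = p₁ ^ α₁ * p₂ ^ α₂) (v : IdealVertex m) : p₁ ∣ v.1 ∨ p₂ ∣ v.1 := by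
  obtain ⟨hdvd, hne1, hnem⟩ := v.2
  obtain ⟨q, hq, hqd⟩ := Nat.exists_prime_and_dvd hne1
  have hqm : q ∣ p₁ ^ α₁ * p₂ ^ α₂ := hmeq ▸ hqd.trans hdvd
  rcases (Nat.Prime.dvd_mul hq).mp hqm with h | h
  · left
    have := (Nat.prime_dvd_prime_iff_eq hq hp₁).mp (hq.dvd_of_dvd_pow h)
    exact this ▸ hqd
  · right
    have := (Nat.prime_dvd_prime_iff_eq hq hp₂).mp (hq.dvd_of_dvd_pow h)
    exact this ▸ hqd

lemma myaux_adj_iff (hp₁ : p₁.Prime) (hp₂ : p₂.Prime) (hne : p₁ ≠ p₂)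
    (hneq : n = p₁ * p₂) (v u : IdealVertex m) :
    (idealGraph n m).Adj v u ↔
      v ≠ u ∧ ((¬ p₁ ∣ v.1 ∧ ¬ p₁ ∣ u.1) ∨ (¬ p₂ ∣ v.1 ∧ ¬ p₂ ∣ u.1)) := by
  have hcop : Nat.Coprime p₁ p₂ := (Nat.coprime_primes hp₁ hp₂).mpr hne
  have hlcm : ∀ p : ℕ, p.Prime → (p ∣ Nat.lcm v.1 u.1 ↔ p ∣ v.1 ∨ p ∣ u.1) := by
    intro p hp
    constructor
    · intro h
      exact (Nat.Prime.dvd_mul hp).mp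
        (h.trans (Nat.lcm_dvd (dvd_mul_right _ _) (dvd_mul_left _ _)))
    · rintro (h | h)
      exacts [h.trans (Nat.dvd_lcm_left _ _), h.trans (Nat.dvd_lcm_right _ _)]
  have hn : n ∣ Nat.lcm v.1 u.1 ↔ p₁ ∣ Nat.lcm v.1 u.1 ∧ p₂ ∣ Nat.lcm v.1 u.1 := by
    subst hneq
    constructor
    · intro h
      exact ⟨(dvd_mul_right _ _).trans h, (dvd_mul_left _ _).trans h⟩
    · rintro ⟨h₁, h₂⟩
      exact hcop.mul_dvd_of_dvd_of_dvd h₁ h₂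
  show (v ≠ u ∧ ¬ n ∣ Nat.lcm v.1 u.1) ↔ _
  rw [hn, hlcm p₁ hp₁, hlcm p₂ hp₂]
  tauto

end NT

section DEG
variable {p₁ p₂ α₁ α₂ n m : ℕ}

lemma myaux_pow_inj (hp₁ : p₁.Prime) : Function.Injective (p₁ ^ ·) :=
  Nat.pow_right_injective hp₁.two_le

lemma myaux_deg (hp₁ : p₁.Prime) (hp₂ : p₂.Prime) (hne : p₁ ≠ p₂) (hα₂ : 1 ≤ α₂)
    (hneq : n = p₁ * p₂) (hmeq : m = p₁ ^ α₁ * p₂ ^ α₂)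
    (v : IdealVertex m) {a : ℕ} (h1 : 1 ≤ a) (h2 : a ≤ α₁) (hv : v.1 = p₁ ^ a) :
    ((idealGraph n m).neighborSet v).ncard = α₁ - 1 := by
  classical
  set Fn : ℕ → IdealVertex m := fun b =>
    if h : 1 ≤ b ∧ b ≤ α₁ then ⟨p₁ ^ b, myaux_mem_pow hp₁ hp₂ hne hα₂ hmeq h.1 h.2⟩ else v
    with hFn
  set T : Set ℕ := ↑((Finset.Icc 1 α₁).erase a) with hT
  have hmemT : ∀ b, b ∈ T ↔ b ≠ a ∧ (1 ≤ b ∧ b ≤ α₁) := by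
    intro b; simp only [hT, Finset.coe_erase, Set.mem_diff, Finset.coe_Icc, Set.mem_Icc,
      Set.mem_singleton_iff]; tauto
  have hset : (idealGraph n m).neighborSet v = Fn '' T := by
    ext u
    simp only [SimpleGraph.mem_neighborSet, Set.mem_image]
    rw [myaux_adj_iff hp₁ hp₂ hne hneq]
    constructor
    · rintro ⟨hvu, h | h⟩
      · exact absurd (hv ▸ dvd_pow_self p₁ (by omega)) h.1
      · obtain ⟨b, hb1, hb2, hub⟩ := myaux_vert_pow hp₁ hp₂ hmeq u h.2
        refine ⟨b, (hmemT b).mpr ⟨?_, hb1, hb2⟩, ?_⟩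
        · rintro rfl
          exact hvu (Subtype.ext (hv.trans hub.symm))
        · rw [hFn]
          simp only [dif_pos (And.intro hb1 hb2)]
          exact Subtype.ext hub.symm
    · rintro ⟨b, hbT, rfl⟩
      obtain ⟨hba, hb1, hb2⟩ := (hmemT b).mp hbT
      have hFb : (Fn b).1 = p₁ ^ b := by
        rw [hFn]; simp only [dif_pos (And.intro hb1 hb2)]
      constructor
      · intro h
        exact hba (myaux_pow_inj hp₁ (by show p₁ ^ b = p₁ ^ a; rw [← hFb, ← h]; exact hv))
      · right
        exact ⟨by rw [hv]; exact myaux_not_dvd_pow hp₁ hp₂ hne a,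
          by rw [hFb]; exact myaux_not_dvd_pow hp₁ hp₂ hne b⟩
  rw [hset]
  have hinj : Set.InjOn Fn T := by
    intro b hb b' hb' heq
    obtain ⟨-, hb1, hb2⟩ := (hmemT b).mp hb
    obtain ⟨-, hb1', hb2'⟩ := (hmemT b').mp hb'
    apply myaux_pow_inj hp₁
    show p₁ ^ b = p₁ ^ b'
    have e3 : p₁ ^ b = p₁ ^ b' := by
      have e1 : (Fn b).1 = p₁ ^ b := by rw [hFn]; simp only [dif_pos (And.intro hb1 hb2)]
      have e2 : (Fn b').1 = p₁ ^ b' := by rw [hFn]; simp only [dif_pos (And.intro hb1' hb2')]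
      rw [← e1, ← e2, heq]
    exact e3
  rw [Set.ncard_image_of_injOn hinj, hT, Set.ncard_coe_finset,
    Finset.card_erase_of_mem (Finset.mem_Icc.mpr ⟨h1, h2⟩), Nat.card_Icc]
  omega

lemma myaux_deg_zero (hp₁ : p₁.Prime) (hp₂ : p₂.Prime) (hne : p₁ ≠ p₂)
    (hneq : n = p₁ * p₂)
    (v : IdealVertex m) (h₁ : p₁ ∣ v.1) (h₂ : p₂ ∣ v.1) :
    ((idealGraph n m).neighborSet v).ncard = 0 := by
  have : (idealGraph n m).neighborSet v = ∅ := by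
    ext u
    simp only [SimpleGraph.mem_neighborSet, Set.mem_empty_iff_false, iff_false]
    rw [myaux_adj_iff hp₁ hp₂ hne hneq]
    rintro ⟨-, h | h⟩
    exacts [h.1 h₁, h.1 h₂]
  simp [this]

end DEG

lemma myaux_key (p₁ p₂ α₁ α₂ n m : ℕ)
    (hp₁ : p₁.Prime) (hp₂ : p₂.Prime) (hne : p₁ ≠ p₂) (hα₁ : 1 ≤ α₁) (hα₂ : 1 ≤ α₂)
    (hneq : n = p₁ * p₂) (hmeq : m = p₁ ^ α₁ * p₂ ^ α₂)
    (hnotnull : ∃ a b : IdealVertex m, (idealGraph n m).Adj a b) (hle : α₂ ≤ α₁) :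
    (idealGraph n m).chromIndex = (idealGraph n m).maxDeg ↔ Even α₁ := by
  classical
  have hneq' : n = p₂ * p₁ := by rw [hneq, mul_comm]
  have hmeq' : m = p₂ ^ α₂ * p₁ ^ α₁ := by rw [hmeq, mul_comm]
  -- α₁ ≥ 2
  have hα₁2 : 2 ≤ α₁ := by
    obtain ⟨a, b, hadj⟩ := hnotnull
    rw [myaux_adj_iff hp₁ hp₂ hne hneq] at hadj
    obtain ⟨hab, h | h⟩ := hadj
    · obtain ⟨x, hx1, hx2, hxe⟩ := myaux_vert_pow hp₂ hp₁ hmeq' a h.1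
      obtain ⟨y, hy1, hy2, hye⟩ := myaux_vert_pow hp₂ hp₁ hmeq' b h.2
      have hxy : x ≠ y := by
        rintro rfl
        exact hab (Subtype.ext (hxe.trans hye.symm))
      omega
    · obtain ⟨x, hx1, hx2, hxe⟩ := myaux_vert_pow hp₁ hp₂ hmeq a h.1
      obtain ⟨y, hy1, hy2, hye⟩ := myaux_vert_pow hp₁ hp₂ hmeq b h.2
      have hxy : x ≠ y := by
        rintro rfl
        exact hab (Subtype.ext (hxe.trans hye.symm))
      omega
  -- the p₁-clique
  set A : Fin α₁ → IdealVertex m := fun i =>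
    ⟨p₁ ^ (i.1 + 1), myaux_mem_pow hp₁ hp₂ hne hα₂ hmeq (Nat.succ_le_succ (Nat.zero_le _)) i.isLt⟩
    with hA
  have hAval : ∀ i : Fin α₁, (A i).1 = p₁ ^ (i.1 + 1) := fun i => rfl
  have hAinj : ∀ i j : Fin α₁, A i = A j → i = j := by
    intro i j h
    have := myaux_pow_inj hp₁ (show p₁ ^ (i.1+1) = p₁ ^ (j.1+1) by
      rw [← hAval i, ← hAval j, h])
    exact Fin.ext (by omega)
  have hAadj : ∀ i j : Fin α₁, i ≠ j → (idealGraph n m).Adj (A i) (A j) := by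
    intro i j hij
    rw [myaux_adj_iff hp₁ hp₂ hne hneq]
    refine ⟨fun h => hij (hAinj i j h), Or.inr ?_⟩
    exact ⟨by rw [hAval]; exact myaux_not_dvd_pow hp₁ hp₂ hne _,
      by rw [hAval]; exact myaux_not_dvd_pow hp₁ hp₂ hne _⟩
  have hdegA : ∀ i : Fin α₁, ((idealGraph n m).neighborSet (A i)).ncard = α₁ - 1 := by
    intro i
    exact myaux_deg hp₁ hp₂ hne hα₂ hneq hmeq (A i)
      (Nat.succ_le_succ (Nat.zero_le _)) i.isLt (hAval i)
  have i0 : Fin α₁ := ⟨0, by omega⟩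
  -- max degree
  have hmaxdeg : (idealGraph n m).maxDeg = α₁ - 1 := by
    have hub : ∀ x ∈ {k : ℕ | ∃ v : IdealVertex m,
        ((idealGraph n m).neighborSet v).ncard = k}, x ≤ α₁ - 1 := by
      rintro x ⟨v, rfl⟩
      by_cases hv2 : p₂ ∣ v.1
      · by_cases hv1 : p₁ ∣ v.1
        · rw [myaux_deg_zero hp₁ hp₂ hne hneq v hv1 hv2]
          omega
        · obtain ⟨b, hb1, hb2, hbe⟩ := myaux_vert_pow hp₂ hp₁ hmeq' v hv1
          rw [myaux_deg hp₂ hp₁ hne.symm hα₁ hneq' hmeq' v hb1 hb2 hbe]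
          omega
      · obtain ⟨b, hb1, hb2, hbe⟩ := myaux_vert_pow hp₁ hp₂ hmeq v hv2
        rw [myaux_deg hp₁ hp₂ hne hα₂ hneq hmeq v hb1 hb2 hbe]
    have hmem : α₁ - 1 ∈ {k : ℕ | ∃ v : IdealVertex m,
        ((idealGraph n m).neighborSet v).ncard = k} := ⟨A i0, hdegA i0⟩
    exact le_antisymm (csSup_le ⟨_, hmem⟩ hub) (le_csSup ⟨α₁ - 1, hub⟩ hmem)
  -- lower bound for any coloring
  have hlb : ∀ k : ℕ, (idealGraph n m).EdgeColorable k → α₁ - 1 ≤ k := by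
    intro k hk
    have := ncard_neighbor_le_of_colorable (idealGraph n m) hk (A i0)
    rwa [hdegA i0] at this
  -- the index function
  set idx : IdealVertex m → ℕ := fun v =>
    v.1.factorization p₁ + v.1.factorization p₂ - 1 with hidx
  have hidx1 : ∀ (v : IdealVertex m) (a : ℕ), v.1 = p₁ ^ a → idx v = a - 1 := by
    intro v a hv
    rw [hidx]
    simp only [hv, hp₁.factorization_pow, Finsupp.single_eq_same,
      Finsupp.single_eq_of_ne' hne]
    omega
  have hidx2 : ∀ (v : IdealVertex m) (a : ℕ), v.1 = p₂ ^ a → idx v = a - 1 := by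
    intro v a hv
    rw [hidx]
    simp only [hv, hp₂.factorization_pow, Finsupp.single_eq_same,
      Finsupp.single_eq_of_ne' (Ne.symm hne)]
    omega
  -- even case: construction
  have heven_col : Even α₁ → (idealGraph n m).EdgeColorable (α₁ - 1) := by
    intro heven
    have hKpos : 0 < α₁ - 1 := by omega
    have hKodd : Odd (α₁ - 1) := Nat.Even.sub_odd (by omega) heven odd_one
    set f : IdealVertex m → IdealVertex m → Fin (α₁ - 1) := fun v u =>
      ⟨rrg (α₁ - 1) (idx v) (idx u), rrg_lt hKpos _ _⟩ with hf
    apply edgeColorable_of_proper _ f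
    · intro v u
      exact Fin.mk_eq_mk.mpr (rrg_symm _ _ _)
    · intro v u u' hadj hadj' huu'
      rw [myaux_adj_iff hp₁ hp₂ hne hneq] at hadj hadj'
      have hvor := myaux_vert_dvd_or hp₁ hp₂ hmeq v
      simp only [hf, ne_eq, Fin.mk_eq_mk]
      obtain ⟨hvu, h | h⟩ := hadj
      · -- p₂-clique
        obtain ⟨hvu', h' | h'⟩ := hadj'
        · obtain ⟨c, hc1, hc2, hce⟩ := myaux_vert_pow hp₂ hp₁ hmeq' v h.1
          obtain ⟨b, hb1, hb2, hbe⟩ := myaux_vert_pow hp₂ hp₁ hmeq' u h.2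
          obtain ⟨b', hb1', hb2', hbe'⟩ := myaux_vert_pow hp₂ hp₁ hmeq' u' h'.2
          rw [hidx2 v c hce, hidx2 u b hbe, hidx2 u' b' hbe']
          apply rrg_proper hKodd (by omega) (by omega) (by omega)
          · intro hh
            exact hvu (Subtype.ext (by rw [hbe, hce]; congr 1; omega)).symm
          · intro hh
            exact hvu' (Subtype.ext (by rw [hbe', hce]; congr 1; omega)).symm
          · intro hh
            exact huu' (Subtype.ext (by rw [hbe, hbe']; congr 1; omega))
        · exact absurd hvor (by tauto)
      · -- p₁-clique
        obtain ⟨hvu', h' | h'⟩ := hadj'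
        · exact absurd hvor (by tauto)
        · obtain ⟨c, hc1, hc2, hce⟩ := myaux_vert_pow hp₁ hp₂ hmeq v h.1
          obtain ⟨b, hb1, hb2, hbe⟩ := myaux_vert_pow hp₁ hp₂ hmeq u h.2
          obtain ⟨b', hb1', hb2', hbe'⟩ := myaux_vert_pow hp₁ hp₂ hmeq u' h'.2
          rw [hidx1 v c hce, hidx1 u b hbe, hidx1 u' b' hbe']
          apply rrg_proper hKodd (by omega) (by omega) (by omega)
          · intro hh
            exact hvu (Subtype.ext (by rw [hbe, hce]; congr 1; omega)).symm
          · intro hh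
            exact hvu' (Subtype.ext (by rw [hbe', hce]; congr 1; omega)).symm
          · intro hh
            exact huu' (Subtype.ext (by rw [hbe, hbe']; congr 1; omega))
  -- odd case: lower bound α₁
  have hodd_lb : ¬ Even α₁ → ∀ k : ℕ, (idealGraph n m).EdgeColorable k → α₁ ≤ k := by
    intro hodd k hk
    obtain ⟨C, hC⟩ := hk
    have hα₁3 : 3 ≤ α₁ := by
      rcases Nat.even_or_odd α₁ with h | h
      · exact absurd h hodd
      · obtain ⟨t, ht⟩ := h; omega
    rcases k with _ | k'
    · exact absurd (C ⟨s(A ⟨0, by omega⟩, A ⟨1, by omega⟩),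
        hAadj _ _ (by simp [Fin.ext_iff])⟩).elim0 id
    set d0 : Fin (k' + 1) := ⟨0, Nat.succ_pos _⟩ with hd0
    set cf : Sym2 (Fin α₁) → Fin (k' + 1) := Sym2.lift ⟨fun i j =>
      if h : (idealGraph n m).Adj (A i) (A j) then C ⟨s(A i, A j), h⟩ else d0, by
        intro i j
        dsimp only
        by_cases h : (idealGraph n m).Adj (A i) (A j)
        · rw [dif_pos h, dif_pos h.symm]
          congr 1
          exact Subtype.ext Sym2.eq_swap
        · rw [dif_neg h, dif_neg (fun h' => h h'.symm)]⟩ with hcf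
    apply odd_clique_color_bound hα₁3 (Nat.odd_iff.mpr (by
      rcases Nat.even_or_odd α₁ with h | h
      · exact absurd h hodd
      · exact Nat.odd_iff.mp h)) cf
    intro e₁ e₂ hd₁ hd₂ hne12 hshared
    induction e₁ with
    | _ i j =>
    induction e₂ with
    | _ i' j' =>
    have hij : i ≠ j := by rwa [Sym2.mk_isDiag_iff] at hd₁
    have hij' : i' ≠ j' := by rwa [Sym2.mk_isDiag_iff] at hd₂
    have hadj1 := hAadj i j hij
    have hadj2 := hAadj i' j' hij'
    simp only [hcf, Sym2.lift_mk]
    rw [dif_pos hadj1, dif_pos hadj2]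
    apply hC
    · intro hEq
      apply hne12
      have : Sym2.map A s(i, j) = Sym2.map A s(i', j') := by
        rw [Sym2.map_pair_eq, Sym2.map_pair_eq]
        exact congrArg Subtype.val hEq
      exact Sym2.map.injective (fun x y h => hAinj x y h) this
    · obtain ⟨v, hv₁, hv₂⟩ := hshared
      refine ⟨A v, ?_, ?_⟩
      · rcases Sym2.mem_iff.mp hv₁ with rfl | rfl <;> simp
      · rcases Sym2.mem_iff.mp hv₂ with rfl | rfl <;> simp
  -- conclude
  rw [hmaxdeg]
  constructor
  · intro h
    by_contra hodd
    have hlb' := hodd_lb hodd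
    rcases Set.eq_empty_or_nonempty {k : ℕ | (idealGraph n m).EdgeColorable k} with hS | hS
    · have : (idealGraph n m).chromIndex = 0 := by
        unfold SimpleGraph.chromIndex
        rw [hS, Nat.sInf_empty]
      omega
    · have hmem := Nat.sInf_mem hS
      have := hlb' _ hmem
      unfold SimpleGraph.chromIndex at h
      omega
  · intro heven
    have hcol := heven_col heven
    apply le_antisymm
    · exact Nat.sInf_le hcol
    · exact le_csInf ⟨_, hcol⟩ (fun k hk => hlb k hk)

/-- If `n = p₁p₂` and `m = p₁^{α₁}p₂^{α₂}` and `G_n(Z_m)` is not a null graph, then the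
chromatic index of `G_n(Z_m)` equals its maximum degree iff `max{α₁, α₂}` is even. -/
theorem idealGraph_chromIndex_twoPrimes (p₁ p₂ α₁ α₂ n m : ℕ)
    (hp₁ : p₁.Prime) (hp₂ : p₂.Prime) (hne : p₁ ≠ p₂) (hα₁ : 1 ≤ α₁) (hα₂ : 1 ≤ α₂)
    (hneq : n = p₁ * p₂) (hmeq : m = p₁ ^ α₁ * p₂ ^ α₂)
    (hnotnull : ∃ a b : IdealVertex m, (idealGraph n m).Adj a b) :
    (idealGraph n m).chromIndex = (idealGraph n m).maxDeg ↔
      Even (max α₁ α₂) := by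
  rcases le_total α₂ α₁ with h | h
  · rw [max_eq_left h]
    exact myaux_key p₁ p₂ α₁ α₂ n m hp₁ hp₂ hne hα₁ hα₂ hneq hmeq hnotnull h
  · rw [max_eq_right h]
    exact myaux_key p₂ p₁ α₂ α₁ n m hp₂ hp₁ hne.symm hα₂ hα₁ (by rw [hneq, mul_comm])
      (by rw [hmeq, mul_comm]) hnotnull h
end
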